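/- (Pure-model algorithmic threshold, balanced case.) Fix positive integers a₁, …, a_r with Σ_s a_s ≥ 3 and weights λ_s = a_s / (Σ_{s'} a_{s'}). Then the supremum of 2 Σ_s √(λ_s a_s b_s (1 − b_s)) over vectors b ∈ [0,1]^r with Σ_s a_s b_s = 1 is uniquely attained at b_s = 1/(Σ_{s'} a_{s'}) for all s, and the supremum value equals 2 √((A − 1)/A) where A = Σ_s a_s. -/

import Mathlib

/-!
With `A = Σ_s a_s` the objective is `(2/√A) Σ_s a_s √(b_s (1 − b_s))`. By AM–GM applied to
`(A − 1) b_s` and `1 − b_s`, each `2√(A − 1) √(b_s (1 − b_s))` lies below the tangent line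
`1 + (A − 2) b_s` at `b_s = 1/A`, with equality only there. Summing with weights `a_s` and
using `Σ_s a_s b_s = 1`, the tangent lines add up to exactly `2(A − 1)`, which gives the bound
`Σ_s a_s √(b_s (1 − b_s)) ≤ √(A − 1)` and forces `b_s = 1/A` in the case of equality.
-/

open scoped BigOperators

/-- The one-step pure-model objective `2 Σ_s √(λ_s a_s b_s (1 − b_s))` with weights
`λ_s = a_s / A`, `A = Σ_s a_s`. -/
noncomputable def pureObj (r : ℕ) (a : Fin r → ℕ) (b : Fin r → ℝ) : ℝ :=
  2 * ∑ s, Real.sqrt (((a s : ℝ) / (∑ s', (a s' : ℝ))) * (a s : ℝ) * b s * (1 - b s))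

open Real

lemma two_mul_sqrt_mul_sqrt_le_add {u v : ℝ} (hu : 0 ≤ u) (hv : 0 ≤ v) :
    2 * √u * √v ≤ u + v := by
  simpa [sq_sqrt hu, sq_sqrt hv] using two_mul_le_add_sq (√u) (√v)

lemma eq_of_two_mul_sqrt_mul_sqrt_eq_add {u v : ℝ} (hu : 0 ≤ u) (hv : 0 ≤ v)
    (h : 2 * √u * √v = u + v) : u = v := by
  have hsq : (√u - √v) ^ 2 = 0 := by nlinarith [sq_sqrt hu, sq_sqrt hv]
  rw [← sq_sqrt hu, ← sq_sqrt hv, sub_eq_zero.mp (pow_eq_zero_iff two_ne_zero |>.mp hsq)]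

lemma sqrt_mul_sqrt_mul_eq {c x : ℝ} (hc : 0 ≤ c) (hx : 0 ≤ x) (y : ℝ) :
    √c * √(x * y) = √(c * x) * √y := by
  rw [← sqrt_mul hc, ← sqrt_mul (mul_nonneg hc hx), mul_assoc]

section Tangent

variable {A x : ℝ}

lemma two_mul_sqrt_mul_sqrt_mul_one_sub_le (hA : 1 ≤ A) (hx : x ∈ Set.Icc (0 : ℝ) 1) :
    2 * √(A - 1) * √(x * (1 - x)) ≤ 1 + (A - 2) * x := by
  have := two_mul_sqrt_mul_sqrt_le_add (mul_nonneg (sub_nonneg.mpr hA) hx.1)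
    (sub_nonneg.mpr hx.2)
  rw [mul_assoc, sqrt_mul_sqrt_mul_eq (sub_nonneg.mpr hA) hx.1]
  linarith

lemma eq_inv_of_two_mul_sqrt_mul_sqrt_mul_one_sub_eq (hA : 1 ≤ A) (hx : x ∈ Set.Icc (0 : ℝ) 1)
    (h : 2 * √(A - 1) * √(x * (1 - x)) = 1 + (A - 2) * x) : x = A⁻¹ := by
  rw [mul_assoc, sqrt_mul_sqrt_mul_eq (sub_nonneg.mpr hA) hx.1] at h
  have := eq_of_two_mul_sqrt_mul_sqrt_eq_add (mul_nonneg (sub_nonneg.mpr hA) hx.1)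
    (sub_nonneg.mpr hx.2) (by linarith)
  have hA0 : A ≠ 0 := by positivity
  field_simp
  linarith

end Tangent

section WeightedSum

variable {ι : Type*} [Fintype ι] {w x : ι → ℝ}

lemma sum_mul_tangent_eq (hwx : ∑ i, w i * x i = 1) :
    ∑ i, w i * (1 + (∑ j, w j - 2) * x i) = 2 * (∑ j, w j - 1) := by
  simp only [mul_add, mul_one, Finset.sum_add_distrib, mul_left_comm (w _) (_ - 2),
    ← Finset.mul_sum, hwx]
  ring

lemma sum_mul_sqrt_mul_one_sub_le (hw : ∀ i, 0 ≤ w i) (hA : 1 < ∑ i, w i)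
    (hx : ∀ i, x i ∈ Set.Icc (0 : ℝ) 1) (hwx : ∑ i, w i * x i = 1) :
    ∑ i, w i * √(x i * (1 - x i)) ≤ √(∑ i, w i - 1) := by
  have hc : 0 < √(∑ i, w i - 1) := sqrt_pos.mpr (by linarith)
  have hsum : 2 * √(∑ i, w i - 1) * ∑ i, w i * √(x i * (1 - x i)) ≤ 2 * (∑ i, w i - 1) := by
    rw [← sum_mul_tangent_eq hwx, Finset.mul_sum]
    refine Finset.sum_le_sum fun i _ => ?_
    rw [mul_left_comm]
    exact mul_le_mul_of_nonneg_left
      (two_mul_sqrt_mul_sqrt_mul_one_sub_le hA.le (hx i)) (hw i)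
  nlinarith [mul_self_sqrt (sub_nonneg.mpr hA.le)]

lemma eq_const_inv_of_sum_mul_sqrt_mul_one_sub_eq (hw : ∀ i, 0 < w i) (hA : 1 < ∑ i, w i)
    (hx : ∀ i, x i ∈ Set.Icc (0 : ℝ) 1) (hwx : ∑ i, w i * x i = 1)
    (h : ∑ i, w i * √(x i * (1 - x i)) = √(∑ i, w i - 1)) :
    x = fun _ => (∑ i, w i)⁻¹ := by
  have hle : ∀ i ∈ Finset.univ,
      w i * (2 * √(∑ j, w j - 1) * √(x i * (1 - x i))) ≤ w i * (1 + (∑ j, w j - 2) * x i) :=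
    fun i _ => mul_le_mul_of_nonneg_left
      (two_mul_sqrt_mul_sqrt_mul_one_sub_le hA.le (hx i)) (hw i).le
  have hsum : ∑ i, w i * (2 * √(∑ j, w j - 1) * √(x i * (1 - x i)))
      = ∑ i, w i * (1 + (∑ j, w j - 2) * x i) := by
    have : ∑ i, w i * (2 * √(∑ j, w j - 1) * √(x i * (1 - x i)))
        = 2 * √(∑ j, w j - 1) * ∑ i, w i * √(x i * (1 - x i)) := by
      rw [Finset.mul_sum]
      exact Finset.sum_congr rfl fun i _ => by ring
    rw [this, h, sum_mul_tangent_eq hwx, mul_assoc, mul_self_sqrt (by linarith)]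
  have htermwise := (Finset.sum_eq_sum_iff_of_le hle).mp hsum
  funext i
  exact eq_inv_of_two_mul_sqrt_mul_sqrt_mul_one_sub_eq hA.le (hx i)
    (mul_left_cancel₀ (hw i).ne' (htermwise i (Finset.mem_univ i)))

lemma sum_mul_sqrt_inv_mul_one_sub_inv (hA : 1 ≤ ∑ i, w i) :
    ∑ i, w i * √((∑ j, w j)⁻¹ * (1 - (∑ j, w j)⁻¹)) = √(∑ i, w i - 1) := by
  have hA0 : ∑ i, w i ≠ 0 := by positivity
  have : (∑ j, w j)⁻¹ * (1 - (∑ j, w j)⁻¹) = (∑ i, w i - 1) / (∑ i, w i) ^ 2 := by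
    field_simp
  rw [← Finset.sum_mul, this, sqrt_div' _ (sq_nonneg _), sqrt_sq (by linarith)]
  field_simp

end WeightedSum

lemma pureObj_eq (r : ℕ) (a : Fin r → ℕ) (b : Fin r → ℝ) :
    pureObj r a b = 2 / √(∑ s, (a s : ℝ)) * ∑ s, (a s : ℝ) * √(b s * (1 - b s)) := by
  rw [pureObj, Finset.mul_sum, Finset.mul_sum]
  refine Finset.sum_congr rfl fun s _ => ?_
  rw [show (a s : ℝ) / (∑ s', (a s' : ℝ)) * a s * b s * (1 - b s)
      = (a s : ℝ) ^ 2 / (∑ s', (a s' : ℝ)) * (b s * (1 - b s)) by ring,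
    sqrt_mul (by positivity), sqrt_div' _ (by positivity), sqrt_sq (by positivity)]
  ring

/-- Pure-model algorithmic threshold, balanced case: with `λ_s = a_s / A` and
`A = Σ_s a_s ≥ 3`, the supremum of `2 Σ_s √(λ_s a_s b_s (1 − b_s))` over `b ∈ [0,1]^r`
with `Σ_s a_s b_s = 1` is uniquely attained at `b_s = 1/A`, where it equals
`2 √((A − 1)/A)`. -/
theorem stmt_14 (r : ℕ) (a : Fin r → ℕ) (ha : ∀ s, 0 < a s) (hA : 3 ≤ ∑ s, a s) :
    (pureObj r a (fun _ => (∑ s', (a s' : ℝ))⁻¹)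
        = 2 * Real.sqrt (((∑ s', (a s' : ℝ)) - 1) / (∑ s', (a s' : ℝ))))
    ∧ ∀ b : Fin r → ℝ, (∀ s, b s ∈ Set.Icc (0 : ℝ) 1) → (∑ s, (a s : ℝ) * b s = 1) →
        pureObj r a b ≤ 2 * Real.sqrt (((∑ s', (a s' : ℝ)) - 1) / (∑ s', (a s' : ℝ)))
        ∧ (pureObj r a b = 2 * Real.sqrt (((∑ s', (a s' : ℝ)) - 1) / (∑ s', (a s' : ℝ)))
            → b = fun _ => (∑ s', (a s' : ℝ))⁻¹) := by
  have hA1 : 1 < ∑ s, (a s : ℝ) := by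
    have : (3 : ℝ) ≤ ∑ s, (a s : ℝ) := by exact_mod_cast hA
    linarith
  have hpos : 0 < 2 / √(∑ s, (a s : ℝ)) := by positivity
  have hvalue : 2 * √((∑ s, (a s : ℝ) - 1) / ∑ s, (a s : ℝ))
      = 2 / √(∑ s, (a s : ℝ)) * √(∑ s, (a s : ℝ) - 1) := by
    rw [sqrt_div' _ (by linarith)]
    ring
  refine ⟨by rw [pureObj_eq, hvalue, sum_mul_sqrt_inv_mul_one_sub_inv hA1.le],
    fun b hb hab => ⟨?_, fun h => ?_⟩⟩
  · rw [pureObj_eq, hvalue]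
    exact mul_le_mul_of_nonneg_left
      (sum_mul_sqrt_mul_one_sub_le (fun s => by positivity) hA1 hb hab) hpos.le
  · rw [pureObj_eq, hvalue] at h
    exact eq_const_inv_of_sum_mul_sqrt_mul_one_sub_eq (fun s => by exact_mod_cast ha s) hA1 hb hab
      (mul_left_cancel₀ hpos.ne' h)
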